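/- arXiv:2005.05697 — 2 statements merged into one kernel-verified Lean document; each statement's English description precedes it below -/
import Mathlib

section
/- Let ρ : Γ ↷ (X,ν) be a measurable action of a countable discrete group on a probability space. Then the following are equivalent: (1) ρ is asymptotically expanding in measure; (2) every measurable subset Y ⊆ X with ν(Y) > 0 admits an exhaustion by domains of expansion; (3) X admits an exhaustion by domains of expansion; (4) X admits an exhaustion by domains of asymptotic expansion. -/
/-
Asymptotic expansion upgrades itself: for all `α, β > 0` one finite `T` spreads every set of
measure at least `α` over all of `X` but `β`. Iterating the expansion estimate pushes a set past
half of `X`; what a set of more than half misses after one more spreading step is small, since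
otherwise it would in turn spread past half of `X` and hence into the set.

With this, greedily removing nearly largest small nonexpanding sets from `Y` leaves a domain of
expansion containing almost all of `Y`, and domains of expansion of positive measure are closed
under finite unions: this gives the exhaustions (1 ⇒ 2). Conversely the spreading property holds
relative to every domain of asymptotic expansion, and on a member of the exhaustion covering all
of `X` but `α / 2` it yields asymptotic expansion of `X` at `α` (4 ⇒ 1).
-/

open MeasureTheory Set Filter Pointwise

/-- The union `S · A = ⋃ s ∈ S, s • A` of the translates of `A` by elements of the
finite set `S ⊆ Γ`. -/
def finSMul {Γ X : Type*} [Group Γ] [MulAction Γ X] (S : Finset Γ) (A : Set X) : Set X :=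
  ⋃ s ∈ S, s • A

/-- `S` is a finite symmetric subset of `Γ` containing the identity. -/
def SymmFin {Γ : Type*} [Group Γ] (S : Finset Γ) : Prop :=
  (1 : Γ) ∈ S ∧ ∀ s ∈ S, s⁻¹ ∈ S

/-- The `S`-boundary `∂_S A = (S·A) \ A`. -/
def finBdry {Γ X : Type*} [Group Γ] [MulAction Γ X] (S : Finset Γ) (A : Set X) : Set X :=
  finSMul S A \ A

/-- `Y` is a domain of `(c,S)`-expansion: `ν((S·A) ∩ Y) > (1+c)·ν(A)` for every
measurable `A ⊆ Y` with `0 < ν(A) ≤ ν(Y)/2`. -/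
def ExpandsOn {Γ X : Type*} [Group Γ] [MulAction Γ X] [MeasurableSpace X]
    (ν : MeasureTheory.Measure X) (Y : Set X) (c : ℝ) (S : Finset Γ) : Prop :=
  ∀ A : Set X, MeasurableSet A → A ⊆ Y → 0 < ν A → ν A ≤ ν Y / 2 →
    (1 + ENNReal.ofReal c) * ν A < ν (finSMul S A ∩ Y)

/-- `Y` is a domain of expansion: `(c,S)`-expansion for some `c > 0` and some finite
symmetric `S ∋ 1`. -/
def ExpDomain (Γ : Type*) {X : Type*} [Group Γ] [MulAction Γ X] [MeasurableSpace X]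
    (ν : MeasureTheory.Measure X) (Y : Set X) : Prop :=
  ∃ c : ℝ, 0 < c ∧ ∃ S : Finset Γ, SymmFin S ∧ ExpandsOn ν Y c S

/-- The `(α,c,S)` asymptotic-expansion estimate on `Y`: `ν((S·A) ∩ Y) > (1+c)·ν(A)` for
every measurable `A ⊆ Y` with `α·ν(Y) ≤ ν(A) ≤ ν(Y)/2`. -/
def AsymExpandsOn {Γ X : Type*} [Group Γ] [MulAction Γ X] [MeasurableSpace X]
    (ν : MeasureTheory.Measure X) (Y : Set X) (α c : ℝ) (S : Finset Γ) : Prop :=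
  ∀ A : Set X, MeasurableSet A → A ⊆ Y → ENNReal.ofReal α * ν Y ≤ ν A → ν A ≤ ν Y / 2 →
    (1 + ENNReal.ofReal c) * ν A < ν (finSMul S A ∩ Y)

/-- `Y` is a domain of asymptotic expansion. -/
def AsymExpDomain (Γ : Type*) {X : Type*} [Group Γ] [MulAction Γ X] [MeasurableSpace X]
    (ν : MeasureTheory.Measure X) (Y : Set X) : Prop :=
  ∀ α : ℝ, 0 < α → α ≤ 1 / 2 →
    ∃ c : ℝ, 0 < c ∧ ∃ S : Finset Γ, SymmFin S ∧ AsymExpandsOn ν Y α c S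

/-- The action of `Γ` on the probability space `(X,ν)` is strongly ergodic: every almost
invariant sequence of measurable sets is asymptotically trivial. -/
def StronglyErgodic (Γ : Type*) {X : Type*} [Group Γ] [MulAction Γ X] [MeasurableSpace X]
    (ν : MeasureTheory.Measure X) : Prop :=
  ∀ C : ℕ → Set X, (∀ n, MeasurableSet (C n)) →
    (∀ γ : Γ, Filter.Tendsto (fun n => ν (symmDiff (C n) (γ • C n))) Filter.atTop (nhds 0)) →
    Filter.Tendsto (fun n => ν (C n) * (1 - ν (C n))) Filter.atTop (nhds 0)

/-- The action of `Γ` on `(X,ν)` is measure-class-preserving. -/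
def MeasClassPres (Γ : Type*) {X : Type*} [Group Γ] [MulAction Γ X] [MeasurableSpace X]
    (ν : MeasureTheory.Measure X) : Prop :=
  ∀ (γ : Γ) (A : Set X), MeasurableSet A → (ν (γ • A) = 0 ↔ ν A = 0)

/-- The action of `Γ` on `(X,ν)` is ergodic: every invariant measurable set is null or
conull. -/
def ErgodicAct (Γ : Type*) {X : Type*} [Group Γ] [MulAction Γ X] [MeasurableSpace X]
    (ν : MeasureTheory.Measure X) : Prop :=
  ∀ A : Set X, MeasurableSet A → (∀ γ : Γ, γ • A = A) → ν A = 0 ∨ ν Aᶜ = 0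

/-- `W` admits an exhaustion by measurable subsets satisfying `P`. -/
def ExhaustionBy {X : Type*} [MeasurableSpace X] (ν : MeasureTheory.Measure X)
    (W : Set X) (P : Set X → Prop) : Prop :=
  ∃ Y : ℕ → Set X, Monotone Y ∧ (∀ n, MeasurableSet (Y n)) ∧ (∀ n, Y n ⊆ W) ∧
    (∀ n, P (Y n)) ∧ ν (W \ ⋃ n, Y n) = 0

open scoped Topology

section Translates

variable {Γ X : Type*} [Group Γ] [MulAction Γ X]

lemma finSMul_mono {S T : Finset Γ} {A B : Set X} (hST : S ⊆ T) (hAB : A ⊆ B) :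
    finSMul S A ⊆ finSMul T B :=
  (biUnion_subset_biUnion_left hST).trans (iUnion₂_mono fun _ _ => smul_set_mono hAB)

lemma subset_finSMul {S : Finset Γ} (h1 : (1 : Γ) ∈ S) (A : Set X) : A ⊆ finSMul S A :=
  fun _ hx => mem_biUnion h1 (by rwa [one_smul])

@[simp]
lemma finSMul_empty (S : Finset Γ) : finSMul S (∅ : Set X) = ∅ := by
  simp [finSMul]

lemma finSMul_union (S : Finset Γ) (A B : Set X) :
    finSMul S (A ∪ B) = finSMul S A ∪ finSMul S B := by
  simp only [finSMul, smul_set_union, iUnion_union_distrib]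

@[simp]
lemma finSMul_one [DecidableEq Γ] (A : Set X) : finSMul (1 : Finset Γ) A = A := by
  simp [finSMul]

lemma finSMul_mul [DecidableEq Γ] (S T : Finset Γ) (A : Set X) :
    finSMul (S * T) A = finSMul S (finSMul T A) := by
  ext x
  simp only [finSMul, mem_iUnion, Finset.mem_mul, smul_set_iUnion]
  constructor
  · rintro ⟨_, ⟨s, hs, t, ht, rfl⟩, hx⟩
    exact ⟨s, hs, t, ht, by rwa [← mul_smul]⟩
  · rintro ⟨s, hs, t, ht, hx⟩
    exact ⟨s * t, ⟨s, hs, t, ht, rfl⟩, by rwa [mul_smul]⟩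

lemma measurableSet_finSMul [MeasurableSpace X] [MeasurableConstSMul Γ X] (S : Finset Γ)
    {A : Set X} (hA : MeasurableSet A) : MeasurableSet (finSMul S A) :=
  S.measurableSet_biUnion fun s _ => hA.const_smul s

lemma SymmFin.union {S T : Finset Γ} [DecidableEq Γ] (hS : SymmFin S) (hT : SymmFin T) :
    SymmFin (S ∪ T) := by
  refine ⟨Finset.mem_union_left _ hS.1, fun s hs => ?_⟩
  rcases Finset.mem_union.mp hs with h | h
  · exact Finset.mem_union_left _ (hS.2 _ h)
  · exact Finset.mem_union_right _ (hT.2 _ h)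

lemma SymmFin.pow [DecidableEq Γ] {S : Finset Γ} (hS : SymmFin S) (n : ℕ) : SymmFin (S ^ n) := by
  induction n with
  | zero => simp [SymmFin]
  | succ k ih =>
    refine ⟨Finset.one_mem_pow hS.1, fun s hs => ?_⟩
    rw [pow_succ] at hs
    obtain ⟨a, ha, b, hb, rfl⟩ := Finset.mem_mul.mp hs
    rw [mul_inv_rev, pow_succ']
    exact Finset.mul_mem_mul (hS.2 b hb) (ih.2 a ha)

lemma symmFin_union_inv [DecidableEq Γ] {T : Finset Γ} (h1 : (1 : Γ) ∈ T) :
    SymmFin (T ∪ T⁻¹) := by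
  refine ⟨Finset.mem_union_left _ h1, fun s hs => ?_⟩
  rcases Finset.mem_union.mp hs with h | h
  · exact Finset.mem_union_right _ (Finset.inv_mem_inv h)
  · exact Finset.mem_union_left _ (by simpa using h)

lemma SymmFin.disjoint_finSMul_comm {S : Finset Γ} (hS : SymmFin S) {A B : Set X} :
    Disjoint (finSMul S A) B ↔ Disjoint A (finSMul S B) := by
  suffices key : ∀ {A B : Set X}, Disjoint (finSMul S A) B → Disjoint A (finSMul S B) from
    ⟨key, fun h => (key h.symm).symm⟩
  intro A B h
  refine Set.disjoint_left.2 fun x hxA hxB => ?_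
  obtain ⟨s, hs, y, hy, rfl⟩ : ∃ s ∈ S, ∃ y ∈ B, s • y = x := by
    simpa [finSMul, mem_smul_set] using hxB
  exact Set.disjoint_left.1 h (mem_biUnion (hS.2 s hs) ⟨s • y, hxA, inv_smul_smul s y⟩) hy

end Translates

section RealForm

variable {Γ X : Type*} [Group Γ] [MulAction Γ X] [MeasurableSpace X] {ν : Measure X}
  [IsFiniteMeasure ν]

lemma measure_pos_iff_measureReal_pos {A : Set X} : 0 < ν A ↔ 0 < ν.real A := by
  simp [measureReal_def, ENNReal.toReal_pos_iff, measure_lt_top]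

lemma measure_le_div_two_iff {A Y : Set X} : ν A ≤ ν Y / 2 ↔ ν.real A ≤ ν.real Y / 2 := by
  rw [← ENNReal.toReal_le_toReal (measure_ne_top ν A) (by finiteness), ENNReal.toReal_div]
  rfl

lemma ofReal_mul_measure_le_iff {α : ℝ} (hα : 0 ≤ α) {A Y : Set X} :
    ENNReal.ofReal α * ν Y ≤ ν A ↔ α * ν.real Y ≤ ν.real A := by
  rw [← ofReal_measureReal (μ := ν) (s := Y), ← ENNReal.ofReal_mul hα,
    ENNReal.ofReal_le_iff_le_toReal (measure_ne_top ν A)]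
  rfl

lemma one_add_ofReal_mul_measure_lt_iff {c : ℝ} (hc : 0 ≤ c) {A B : Set X} :
    (1 + ENNReal.ofReal c) * ν A < ν B ↔ (1 + c) * ν.real A < ν.real B := by
  rw [← ofReal_measureReal (μ := ν) (s := A), ← ENNReal.ofReal_one,
    ← ENNReal.ofReal_add zero_le_one hc, ← ENNReal.ofReal_mul (by positivity),
    ENNReal.ofReal_lt_iff_lt_toReal (by positivity) (measure_ne_top ν B)]
  rfl

lemma expandsOn_iff {Y : Set X} {c : ℝ} (hc : 0 ≤ c) {S : Finset Γ} :
    ExpandsOn ν Y c S ↔ ∀ A, MeasurableSet A → A ⊆ Y → 0 < ν.real A →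
      ν.real A ≤ ν.real Y / 2 → (1 + c) * ν.real A < ν.real (finSMul S A ∩ Y) := by
  simp only [ExpandsOn, measure_pos_iff_measureReal_pos, measure_le_div_two_iff,
    one_add_ofReal_mul_measure_lt_iff hc]

lemma asymExpandsOn_iff {Y : Set X} {α c : ℝ} (hα : 0 ≤ α) (hc : 0 ≤ c) {S : Finset Γ} :
    AsymExpandsOn ν Y α c S ↔ ∀ A, MeasurableSet A → A ⊆ Y → α * ν.real Y ≤ ν.real A →
      ν.real A ≤ ν.real Y / 2 → (1 + c) * ν.real A < ν.real (finSMul S A ∩ Y) := by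
  simp only [AsymExpandsOn, ofReal_mul_measure_le_iff hα, measure_le_div_two_iff,
    one_add_ofReal_mul_measure_lt_iff hc]

end RealForm

section MeasureLemmas

variable {X : Type*} [MeasurableSpace X] {ν : Measure X}

lemma add_sub_one_le_measureReal_inter [IsProbabilityMeasure ν] (s : Set X) {t : Set X}
    (ht : MeasurableSet t) : ν.real s + ν.real t - 1 ≤ ν.real (s ∩ t) := by
  linarith [measureReal_union_add_inter (μ := ν) (s := s) ht,
    measureReal_le_one (μ := ν) (s := s ∪ t)]

lemma tendsto_measureReal_iUnion_atTop [IsFiniteMeasure ν] {s : ℕ → Set X} (hs : Monotone s) :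
    Tendsto (fun n => ν.real (s n)) atTop (𝓝 (ν.real (⋃ n, s n))) :=
  (ENNReal.tendsto_toReal (measure_ne_top ν _)).comp (tendsto_measure_iUnion_atTop hs)

lemma exists_forall_measureReal_le_two_mul [IsFiniteMeasure ν] {P : Set X → Prop}
    (h : ∃ A, P A) : ∃ A, P A ∧ ∀ B, P B → ν.real B ≤ 2 * ν.real A := by
  obtain ⟨A₀, hA₀⟩ := h
  set Q : Set ℝ := (fun A => ν.real A) '' {A | P A}
  have hQ : BddAbove Q :=
    ⟨ν.real univ, by rintro _ ⟨A, -, rfl⟩; exact measureReal_mono (subset_univ A)⟩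
  have hle : ∀ B, P B → ν.real B ≤ sSup Q := fun B hB => le_csSup hQ ⟨B, hB, rfl⟩
  rcases le_or_gt (sSup Q) 0 with hsup | hsup
  · exact ⟨A₀, hA₀, fun B hB => (hle B hB).trans (hsup.trans (by positivity))⟩
  · obtain ⟨_, ⟨A, hA, rfl⟩, hlt⟩ := exists_lt_of_lt_csSup (⟨_, A₀, hA₀, rfl⟩ : Q.Nonempty)
      (half_lt_self hsup)
    exact ⟨A, hA, fun B hB => by linarith [hle B hB]⟩

end MeasureLemmas

section ExhaustionBy

variable {X : Type*} [MeasurableSpace X] {ν : Measure X}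

lemma ExhaustionBy.mono {W : Set X} {P Q : Set X → Prop} (hPQ : ∀ Z, P Z → Q Z)
    (h : ExhaustionBy ν W P) : ExhaustionBy ν W Q :=
  let ⟨Y, hmono, hm, hsub, hP, hnull⟩ := h
  ⟨Y, hmono, hm, hsub, fun n => hPQ _ (hP n), hnull⟩

lemma exhaustionBy_of_forall_exists [IsFiniteMeasure ν] {Y : Set X} {P : Set X → Prop}
    (hunion : ∀ Z₁ Z₂, MeasurableSet Z₁ → MeasurableSet Z₂ → P Z₁ → P Z₂ → P (Z₁ ∪ Z₂))
    (hP : ∀ ε : ℝ, 0 < ε → ∃ Z, MeasurableSet Z ∧ Z ⊆ Y ∧ P Z ∧ ν.real (Y \ Z) ≤ ε) :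
    ExhaustionBy ν Y P := by
  choose Z hZm hZY hZP hZε using fun n : ℕ => hP (1 / (n + 1)) Nat.one_div_pos_of_nat
  have hm : ∀ n, MeasurableSet (accumulate Z n) := fun n =>
    MeasurableSet.iUnion fun k => MeasurableSet.iUnion fun _ => hZm k
  refine ⟨accumulate Z, monotone_accumulate, hm, fun n => iUnion₂_subset fun k _ => hZY k,
    fun n => ?_, ?_⟩
  · induction n with
    | zero => simpa [accumulate_zero_nat] using hZP 0
    | succ n ih => rw [accumulate_succ]; exact hunion _ _ (hm n) (hZm _) ih (hZP _)
  · rw [iUnion_accumulate, ← measureReal_eq_zero_iff]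
    refine le_antisymm (ge_of_tendsto' tendsto_one_div_add_atTop_nhds_zero_nat fun n => ?_)
      measureReal_nonneg
    exact (measureReal_mono (sdiff_subset_sdiff_right (subset_iUnion Z n))).trans (hZε n)

end ExhaustionBy

lemma exists_lt_of_geometric_growth {c u₀ L : ℝ} (hc : 0 < c) (hu₀ : 0 < u₀) :
    ∃ N : ℕ, ∀ u : ℕ → ℝ, Monotone u → u₀ ≤ u 0 →
      (∀ n, u n ≤ L → (1 + c) * u n ≤ u (n + 1)) → L < u N := by
  obtain ⟨N, hN⟩ := pow_unbounded_of_one_lt (L / u₀) (lt_add_of_pos_right 1 hc)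
  refine ⟨N, fun u hu h0 hstep => ?_⟩
  have key : ∀ n, L < u n ∨ (1 + c) ^ n * u₀ ≤ u n := by
    intro n
    induction n with
    | zero => simpa using Or.inr h0
    | succ n ih =>
      by_cases hn : u n ≤ L
      · refine Or.inr ?_
        calc (1 + c) ^ (n + 1) * u₀ = (1 + c) * ((1 + c) ^ n * u₀) := by ring
          _ ≤ (1 + c) * u n := by gcongr; exact ih.resolve_left hn.not_gt
          _ ≤ u (n + 1) := hstep n hn
      · exact Or.inl ((not_le.mp hn).trans_le (hu n.le_succ))
  rw [div_lt_iff₀ hu₀] at hN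
  exact (key N).elim id fun h => hN.trans_le h

section AsymptoticExpansion

variable {Γ X : Type*} [Group Γ] [MulAction Γ X] [MeasurableSpace X] {ν : Measure X}

lemma ExpDomain.asymExpDomain {Z : Set X} (hpos : 0 < ν Z) (h : ExpDomain Γ ν Z) :
    AsymExpDomain Γ ν Z := by
  obtain ⟨c, hc, S, hS, hE⟩ := h
  refine fun α hα _ => ⟨c, hc, S, hS, fun A hA hAZ hαA hAhalf => hE A hA hAZ ?_ hAhalf⟩
  exact (ENNReal.mul_pos (ENNReal.ofReal_pos.mpr hα).ne' hpos.ne').trans_le hαA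

variable [MeasurableConstSMul Γ X] [IsFiniteMeasure ν] {Y : Set X}

/-- `T` is a power `S ^ N`: each application of `S` multiplies the measure of the part inside `Y`
by `1 + c` until it exceeds half of `Y`. -/
theorem AsymExpDomain.exists_symmFin_half_lt (hY : AsymExpDomain Γ ν Y) (hYm : MeasurableSet Y)
    (hYpos : 0 < ν Y) {a : ℝ} (ha : 0 < a) :
    ∃ T : Finset Γ, SymmFin T ∧ ∀ A, MeasurableSet A → A ⊆ Y → a * ν.real Y ≤ ν.real A →
      ν.real Y / 2 < ν.real (finSMul T A ∩ Y) := by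
  classical
  have ha' : 0 < min a (1 / 2) := lt_min ha one_half_pos
  obtain ⟨c, hc, S, hS, hexp⟩ := hY _ ha' (min_le_right _ _)
  rw [asymExpandsOn_iff ha'.le hc.le] at hexp
  rw [measure_pos_iff_measureReal_pos] at hYpos
  obtain ⟨N, hN⟩ := exists_lt_of_geometric_growth (L := ν.real Y / 2) hc (mul_pos ha' hYpos)
  refine ⟨S ^ N, hS.pow N, fun A hA hAY haA => ?_⟩
  have hsucc : ∀ n, finSMul (S ^ (n + 1)) A = finSMul S (finSMul (S ^ n) A) := fun n => by
    rw [pow_succ', finSMul_mul]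
  have hu : Monotone fun n => ν.real (finSMul (S ^ n) A ∩ Y) := monotone_nat_of_le_succ fun n =>
    measureReal_mono (inter_subset_inter_left _ (hsucc n ▸ subset_finSMul hS.1 _))
  have hu₀ : min a (1 / 2) * ν.real Y ≤ ν.real (finSMul (S ^ 0) A ∩ Y) := by
    rw [pow_zero, finSMul_one, inter_eq_left.2 hAY]
    exact (mul_le_mul_of_nonneg_right (min_le_left _ _) measureReal_nonneg).trans haA
  refine hN _ hu hu₀ fun n hn => ?_
  calc (1 + c) * ν.real (finSMul (S ^ n) A ∩ Y)
      ≤ ν.real (finSMul S (finSMul (S ^ n) A ∩ Y) ∩ Y) :=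
        (hexp _ ((measurableSet_finSMul _ hA).inter hYm) inter_subset_right
          (hu₀.trans (hu n.zero_le)) hn).le
    _ ≤ ν.real (finSMul (S ^ (n + 1)) A ∩ Y) := by
        rw [hsucc]
        exact measureReal_mono
          (inter_subset_inter_left _ (finSMul_mono subset_rfl inter_subset_left))

/-- Once a set fills more than half of `Y`, the part of `Y` it misses after one more spreading
step is small: otherwise that part would itself spread past half of `Y`, into the set. -/
theorem AsymExpDomain.exists_symmFin_one_sub_lt (hY : AsymExpDomain Γ ν Y)
    (hYm : MeasurableSet Y) (hYpos : 0 < ν Y) {α β : ℝ} (hα : 0 < α) (hβ : 0 < β) :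
    ∃ T : Finset Γ, SymmFin T ∧ ∀ A, MeasurableSet A → A ⊆ Y → α * ν.real Y ≤ ν.real A →
      (1 - β) * ν.real Y < ν.real (finSMul T A ∩ Y) := by
  classical
  obtain ⟨Tα, hTα, hgrowα⟩ := hY.exists_symmFin_half_lt hYm hYpos hα
  obtain ⟨Tβ, hTβ, hgrowβ⟩ := hY.exists_symmFin_half_lt hYm hYpos hβ
  have h1 : (1 : Γ) ∈ Tβ * Tα := by simpa using Finset.mul_mem_mul hTβ.1 hTα.1
  refine ⟨Tβ * Tα ∪ (Tβ * Tα)⁻¹, symmFin_union_inv h1, fun A hA hAY hαA => ?_⟩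
  set B := finSMul Tα A ∩ Y
  have hBm : MeasurableSet B := (measurableSet_finSMul _ hA).inter hYm
  have hB : ν.real Y / 2 < ν.real B := hgrowα A hA hAY hαA
  have hC : ν.real (Y \ finSMul Tβ B) < β * ν.real Y := by
    by_contra! hC
    have hdisj : Disjoint (finSMul Tβ (Y \ finSMul Tβ B)) B :=
      hTβ.disjoint_finSMul_comm.2 disjoint_sdiff_left
    have hsub : finSMul Tβ (Y \ finSMul Tβ B) ∩ Y ⊆ Y \ B := fun x hx =>
      ⟨hx.2, hdisj.notMem_of_mem_left hx.1⟩
    have := hgrowβ _ (hYm.diff (measurableSet_finSMul _ hBm)) sdiff_subset hC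
    linarith [measureReal_mono (μ := ν) hsub, measureReal_sdiff (μ := ν) inter_subset_right hBm]
  have hTβB : finSMul Tβ B ⊆ finSMul (Tβ * Tα ∪ (Tβ * Tα)⁻¹) A := by
    calc finSMul Tβ B ⊆ finSMul Tβ (finSMul Tα A) := finSMul_mono subset_rfl inter_subset_left
      _ = finSMul (Tβ * Tα) A := (finSMul_mul _ _ _).symm
      _ ⊆ _ := finSMul_mono Finset.subset_union_left subset_rfl
  calc (1 - β) * ν.real Y < ν.real (Y ∩ finSMul Tβ B) := by
        linarith [measureReal_inter_add_sdiff (μ := ν) (s := Y) (measurableSet_finSMul Tβ hBm)]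
    _ ≤ ν.real (finSMul (Tβ * Tα ∪ (Tβ * Tα)⁻¹) A ∩ Y) := by
        rw [inter_comm]; exact measureReal_mono (inter_subset_inter_left _ hTβB)

theorem AsymExpDomain.exists_symmFin_sub_lt_measureReal_inter [IsProbabilityMeasure ν]
    (h : AsymExpDomain Γ ν univ) {α β : ℝ} (hα : 0 < α) (hβ : 0 < β) :
    ∃ T : Finset Γ, SymmFin T ∧ ∀ A W, MeasurableSet A → MeasurableSet W → α ≤ ν.real A →
      ν.real W - β < ν.real (finSMul T A ∩ W) := by
  obtain ⟨T, hT, hM⟩ := h.exists_symmFin_one_sub_lt MeasurableSet.univ (by simp) hα hβ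
  refine ⟨T, hT, fun A W hA hW hαA => ?_⟩
  have := hM A hA (subset_univ A) (by simpa using hαA)
  simp only [probReal_univ, mul_one, inter_univ] at this
  linarith [add_sub_one_le_measureReal_inter (ν := ν) (finSMul T A) hW]

end AsymptoticExpansion

section Union

variable {Γ X : Type*} [Group Γ] [MulAction Γ X] [MeasurableSpace X] {ν : Measure X}
  [MeasurableConstSMul Γ X]

/-- `S · (A ∩ Z) ∩ Z` meets `A` only in `A ∩ Z`, so it adds more than `c · ν(A ∩ Z)` to `A`. -/
lemma ExpandsOn.one_add_half_mul_lt [IsFiniteMeasure ν] {Z U A : Set X} {c : ℝ}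
    {S : Finset Γ} (hZ : ExpandsOn ν Z c S) (hc : 0 ≤ c) (hS1 : (1 : Γ) ∈ S)
    (hZm : MeasurableSet Z) (hZU : Z ⊆ U) (hA : MeasurableSet A) (hAU : A ⊆ U)
    (hApos : 0 < ν.real A) (hAZ : ν.real A ≤ 2 * ν.real (A ∩ Z))
    (hAhalf : ν.real A ≤ ν.real Z / 2) :
    (1 + c / 2) * ν.real A < ν.real (finSMul S A ∩ U) := by
  set E := finSMul S (A ∩ Z) ∩ Z
  have hEm : MeasurableSet E := (measurableSet_finSMul _ (hA.inter hZm)).inter hZm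
  have hexp : (1 + c) * ν.real (A ∩ Z) < ν.real E :=
    (expandsOn_iff hc).1 hZ _ (hA.inter hZm) inter_subset_right (by linarith)
      ((measureReal_mono inter_subset_left).trans hAhalf)
  have hEA : ν.real (E ∩ A) ≤ ν.real (A ∩ Z) :=
    measureReal_mono fun x hx => ⟨hx.2, hx.1.2⟩
  have hsub : A ∪ E \ A ⊆ finSMul S A ∩ U :=
    union_subset (subset_inter (subset_finSMul hS1 A) hAU) fun x hx =>
      ⟨finSMul_mono subset_rfl inter_subset_left hx.1.1, hZU hx.1.2⟩
  calc (1 + c / 2) * ν.real A ≤ ν.real A + c * ν.real (A ∩ Z) := by nlinarith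
    _ < ν.real A + ν.real (E \ A) := by
        linarith [measureReal_inter_add_sdiff (μ := ν) (s := E) hA]
    _ = ν.real (A ∪ E \ A) := (measureReal_union disjoint_sdiff_right (hEm.diff hA)).symm
    _ ≤ ν.real (finSMul S A ∩ U) := measureReal_mono hsub

lemma ExpandsOn.one_add_min_half_mul_lt_union [IsFiniteMeasure ν] [DecidableEq Γ]
    {Z₁ Z₂ A : Set X} {c₁ c₂ : ℝ} {S₁ S₂ : Finset Γ} (hE₁ : ExpandsOn ν Z₁ c₁ S₁)
    (hE₂ : ExpandsOn ν Z₂ c₂ S₂) (hc₁ : 0 ≤ c₁) (hc₂ : 0 ≤ c₂) (h₁ : (1 : Γ) ∈ S₁)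
    (h₂ : (1 : Γ) ∈ S₂) (h₁m : MeasurableSet Z₁) (h₂m : MeasurableSet Z₂) (hA : MeasurableSet A)
    (hAU : A ⊆ Z₁ ∪ Z₂) (hApos : 0 < ν.real A) (hA₁ : ν.real A ≤ ν.real Z₁ / 2)
    (hA₂ : ν.real A ≤ ν.real Z₂ / 2) :
    (1 + min c₁ c₂ / 2) * ν.real A < ν.real (finSMul (S₁ ∪ S₂) A ∩ (Z₁ ∪ Z₂)) := by
  have hsplit : ν.real A ≤ ν.real (A ∩ Z₁) + ν.real (A ∩ Z₂) :=
    calc ν.real A = ν.real (A ∩ Z₁ ∪ A ∩ Z₂) := by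
          rw [← inter_union_distrib_left, inter_eq_left.2 hAU]
      _ ≤ _ := measureReal_union_le _ _
  rcases le_or_gt (ν.real A) (2 * ν.real (A ∩ Z₁)) with h₁A | h₁A
  · calc (1 + min c₁ c₂ / 2) * ν.real A ≤ (1 + c₁ / 2) * ν.real A := by
          gcongr; exact min_le_left _ _
      _ < _ := hE₁.one_add_half_mul_lt hc₁ h₁ h₁m subset_union_left hA hAU hApos h₁A hA₁
      _ ≤ _ := measureReal_mono
          (inter_subset_inter_left _ (finSMul_mono Finset.subset_union_left subset_rfl))
  · calc (1 + min c₁ c₂ / 2) * ν.real A ≤ (1 + c₂ / 2) * ν.real A := by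
          gcongr; exact min_le_right _ _
      _ < _ := hE₂.one_add_half_mul_lt hc₂ h₂ h₂m subset_union_right hA hAU hApos
          (by linarith) hA₂
      _ ≤ _ := measureReal_mono
          (inter_subset_inter_left _ (finSMul_mono Finset.subset_union_right subset_rfl))

/-- Small sets expand inside whichever of `Z₁`, `Z₂` carries half of their mass; sets that are
not small are spread over most of the space by asymptotic expansion. -/
theorem ExpDomain.union [IsProbabilityMeasure ν] (h : AsymExpDomain Γ ν univ) {Z₁ Z₂ : Set X}
    (h₁m : MeasurableSet Z₁) (h₂m : MeasurableSet Z₂) (h₁p : 0 < ν Z₁) (h₂p : 0 < ν Z₂)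
    (h₁ : ExpDomain Γ ν Z₁) (h₂ : ExpDomain Γ ν Z₂) : ExpDomain Γ ν (Z₁ ∪ Z₂) := by
  classical
  obtain ⟨c₁, hc₁, S₁, hS₁, hE₁⟩ := h₁
  obtain ⟨c₂, hc₂, S₂, hS₂, hE₂⟩ := h₂
  rw [measure_pos_iff_measureReal_pos] at h₁p h₂p
  have hU : ν.real Z₁ ≤ ν.real (Z₁ ∪ Z₂) := measureReal_mono subset_union_left
  set a := min (ν.real Z₁) (ν.real Z₂) / 2
  have ha₁ : a ≤ ν.real Z₁ / 2 := div_le_div_of_nonneg_right (min_le_left _ _) zero_le_two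
  have ha₂ : a ≤ ν.real Z₂ / 2 := div_le_div_of_nonneg_right (min_le_right _ _) zero_le_two
  obtain ⟨T, hT, hM⟩ := h.exists_symmFin_sub_lt_measureReal_inter (α := a)
    (half_pos (lt_min h₁p h₂p)) (β := ν.real (Z₁ ∪ Z₂) / 4) (by linarith)
  set c := min (min c₁ c₂) 1
  have hc : 0 < c := lt_min (lt_min hc₁ hc₂) one_pos
  refine ⟨c / 2, half_pos hc, S₁ ∪ S₂ ∪ T, (hS₁.union hS₂).union hT, ?_⟩
  rw [expandsOn_iff (half_pos hc).le]
  intro A hA hAU hApos hAhalf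
  rcases lt_or_ge (ν.real A) a with hsmall | hlarge
  · calc (1 + c / 2) * ν.real A ≤ (1 + min c₁ c₂ / 2) * ν.real A := by
          gcongr; exact min_le_left _ _
      _ < _ := hE₁.one_add_min_half_mul_lt_union hE₂ hc₁.le hc₂.le hS₁.1 hS₂.1 h₁m h₂m hA hAU
          hApos (by linarith) (by linarith)
      _ ≤ _ := measureReal_mono
          (inter_subset_inter_left _ (finSMul_mono Finset.subset_union_left subset_rfl))
  · have hc1 : c ≤ 1 := min_le_right _ _
    calc (1 + c / 2) * ν.real A ≤ 3 / 2 * (ν.real (Z₁ ∪ Z₂) / 2) := by gcongr; linarith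
      _ < ν.real (finSMul T A ∩ (Z₁ ∪ Z₂)) := by
          linarith [hM A _ hA (h₁m.union h₂m) hlarge]
      _ ≤ _ := measureReal_mono
          (inter_subset_inter_left _ (finSMul_mono Finset.subset_union_right subset_rfl))

end Union

section Greedy

variable {Γ X : Type*} [Group Γ] [MulAction Γ X] [MeasurableSpace X] {ν : Measure X}

lemma exists_seq_union_of_forall_exists {α : Type*} {Q : Set α → Set α → Prop}
    (hQ : ∀ Z, ∃ R, Q Z R) (Y : Set α) :
    ∃ D R : ℕ → Set α, D 0 = ∅ ∧ ∀ n, D (n + 1) = D n ∪ R n ∧ Q (Y \ D n) (R n) := by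
  choose step hstep using hQ
  let D : ℕ → Set α := fun n => Nat.rec ∅ (fun _ Dn => Dn ∪ step (Y \ Dn)) n
  exact ⟨D, fun n => step (Y \ D n), rfl, fun n => ⟨rfl, hstep _⟩⟩

def SmallNonexpanding (ν : Measure X) (T : Finset Γ) (δ : ℝ) (Z A : Set X) : Prop :=
  MeasurableSet A ∧ A ⊆ Z ∧ ν.real A < δ ∧ ν.real (finSMul T A ∩ Z) ≤ 3 / 2 * ν.real A

lemma SmallNonexpanding.empty {T : Finset Γ} {δ : ℝ} (hδ : 0 < δ) (Z : Set X) :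
    SmallNonexpanding ν T δ Z ∅ := by
  simp [SmallNonexpanding, hδ]

lemma measureReal_finSMul_union_inter_le [IsFiniteMeasure ν] {T : Finset Γ} (hT1 : (1 : Γ) ∈ T)
    {κ : ℝ} {Y D R : Set X} (hRYD : R ⊆ Y \ D) (hRm : MeasurableSet R)
    (hD : ν.real (finSMul T D ∩ Y) ≤ κ * ν.real D)
    (hR : ν.real (finSMul T R ∩ (Y \ D)) ≤ κ * ν.real R) :
    ν.real (finSMul T (D ∪ R) ∩ Y) ≤ κ * ν.real (D ∪ R) := by
  have hsub : finSMul T (D ∪ R) ∩ Y ⊆ (finSMul T D ∩ Y) ∪ (finSMul T R ∩ (Y \ D)) := by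
    rw [finSMul_union]
    rintro x ⟨hx | hx, hxY⟩
    · exact Or.inl ⟨hx, hxY⟩
    · by_cases hxD : x ∈ D
      · exact Or.inl ⟨subset_finSMul hT1 D hxD, hxY⟩
      · exact Or.inr ⟨hx, hxY, hxD⟩
  calc ν.real (finSMul T (D ∪ R) ∩ Y) ≤ κ * ν.real D + κ * ν.real R :=
        (measureReal_mono hsub).trans ((measureReal_union_le _ _).trans (add_le_add hD hR))
    _ = κ * ν.real (D ∪ R) := by
        rw [measureReal_union (Set.disjoint_left.2 fun x hxD hxR => (hRYD hxR).2 hxD) hRm]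
        ring

variable [IsProbabilityMeasure ν] {T : Finset Γ} {δ : ℝ} {Y : Set X}

/-- The union has measure below `2δ`; were it at least `δ`, `T` would spread it over three quarters
of `Y`, more than `3/2` times its measure. -/
lemma SmallNonexpanding.union (hT1 : (1 : Γ) ∈ T)
    (hTM : ∀ A W, MeasurableSet A → MeasurableSet W → δ ≤ ν.real A →
      ν.real W - ν.real Y / 4 < ν.real (finSMul T A ∩ W))
    (hYm : MeasurableSet Y) (hδY : δ ≤ ν.real Y / 8) {D R : Set X}
    (hD : SmallNonexpanding ν T δ Y D) (hR : SmallNonexpanding ν T δ (Y \ D) R) :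
    SmallNonexpanding ν T δ Y (D ∪ R) := by
  obtain ⟨hDm, hDY, hDδ, hDT⟩ := hD
  obtain ⟨hRm, hRYD, hRδ, hRT⟩ := hR
  have hbound := measureReal_finSMul_union_inter_le hT1 hRYD hRm hDT hRT
  refine ⟨hDm.union hRm, union_subset hDY (hRYD.trans sdiff_subset), ?_, hbound⟩
  by_contra! h
  linarith [hTM _ Y (hDm.union hRm) hYm h, measureReal_union_le (μ := ν) D R]

/-- `D` removes from `Y`, step by step, small nonexpanding sets `R n` of nearly largest measure.
A small set `B` left over that does not expand by `5/4` would be nonexpanding at every late stage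
(by the `3/2 - 5/4` margin), so each late `R n` would have at least half the measure of `B`,
although the late `R n` have almost no measure. -/
lemma five_div_four_mul_lt_of_greedy {D R : ℕ → Set X} (hDm : ∀ n, MeasurableSet (D n))
    (hD : ∀ n, D (n + 1) = D n ∪ R n) (hR : ∀ n, R n ⊆ Y \ D n)
    (hmax : ∀ n A, SmallNonexpanding ν T δ (Y \ D n) A → ν.real A ≤ 2 * ν.real (R n))
    {B : Set X} (hB : MeasurableSet B) (hBY : B ⊆ Y \ ⋃ n, D n) (hBpos : 0 < ν.real B)
    (hBδ : ν.real B < δ) :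
    5 / 4 * ν.real B < ν.real (finSMul T B ∩ (Y \ ⋃ n, D n)) := by
  by_contra! hle
  have hmono : Monotone D := monotone_nat_of_le_succ fun n => (hD n).symm ▸ subset_union_left
  obtain ⟨n, hn⟩ : ∃ n, ν.real ((⋃ n, D n) \ D n) < ν.real B / 4 := by
    obtain ⟨n, hn⟩ := ((tendsto_measureReal_iUnion_atTop hmono).eventually
      (lt_mem_nhds (by linarith : ν.real (⋃ n, D n) - ν.real B / 4 < ν.real (⋃ n, D n)))).exists
    exact ⟨n, by rw [measureReal_sdiff (subset_iUnion D n) (hDm n)]; linarith⟩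
  have hsub : finSMul T B ∩ (Y \ D n) ⊆ finSMul T B ∩ (Y \ ⋃ n, D n) ∪ (⋃ n, D n) \ D n := by
    rintro x ⟨hxT, hxY, hxD⟩
    by_cases hx : x ∈ ⋃ n, D n
    · exact Or.inr ⟨hx, hxD⟩
    · exact Or.inl ⟨hxT, hxY, hx⟩
  have hBT := (measureReal_mono (μ := ν) hsub).trans (measureReal_union_le _ _)
  have hBn : SmallNonexpanding ν T δ (Y \ D n) B :=
    ⟨hB, hBY.trans (sdiff_subset_sdiff_right (subset_iUnion D n)), hBδ, by linarith⟩
  have hRn : R n ⊆ (⋃ n, D n) \ D n := fun x hx =>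
    ⟨mem_iUnion.2 ⟨n + 1, hD n ▸ Or.inr hx⟩, (hR n hx).2⟩
  linarith [hmax n B hBn, measureReal_mono (μ := ν) hRn]

end Greedy

section Structure

variable {Γ X : Type*} [Group Γ] [MulAction Γ X] [MeasurableSpace X] {ν : Measure X}
  [MeasurableConstSMul Γ X] [IsProbabilityMeasure ν]

/-- `Z` is what is left of `Y` after greedily removing nearly largest small nonexpanding sets. -/
theorem AsymExpDomain.exists_expDomain_subset (h : AsymExpDomain Γ ν univ) {Y : Set X}
    (hYm : MeasurableSet Y) {δ : ℝ} (hδ : 0 < δ) (hδY : δ ≤ ν.real Y / 8) :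
    ∃ Z ⊆ Y, MeasurableSet Z ∧ ν.real (Y \ Z) ≤ δ ∧ 0 < ν Z ∧ ExpDomain Γ ν Z := by
  obtain ⟨T, hT, hTM⟩ :=
    h.exists_symmFin_sub_lt_measureReal_inter hδ (β := ν.real Y / 4) (by linarith)
  obtain ⟨D, R, hD0, hDR⟩ := exists_seq_union_of_forall_exists
    (Q := fun Z R => SmallNonexpanding ν T δ Z R ∧
      ∀ B, SmallNonexpanding ν T δ Z B → ν.real B ≤ 2 * ν.real R)
    (fun Z => exists_forall_measureReal_le_two_mul ⟨∅, .empty hδ Z⟩) Y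
  choose hD hR hmax using hDR
  have hDs : ∀ n, SmallNonexpanding ν T δ Y (D n) := fun n => by
    induction n with
    | zero => rw [hD0]; exact .empty hδ Y
    | succ n ih => rw [hD]; exact ih.union hT.1 hTM hYm hδY (hR n)
  have hmono : Monotone D := monotone_nat_of_le_succ fun n => (hD n).symm ▸ subset_union_left
  have hDm : MeasurableSet (⋃ n, D n) := .iUnion fun n => (hDs n).1
  have hDδ : ν.real (⋃ n, D n) ≤ δ :=
    le_of_tendsto' (tendsto_measureReal_iUnion_atTop hmono) fun n => (hDs n).2.2.1.le
  have hZ : ν.real Y - δ ≤ ν.real (Y \ ⋃ n, D n) := by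
    linarith [le_measureReal_sdiff (μ := ν) (s₁ := Y) (s₂ := ⋃ n, D n)]
  refine ⟨Y \ ⋃ n, D n, sdiff_subset, hYm.diff hDm, ?_, ?_, 1 / 4, by norm_num, T, hT, ?_⟩
  · rw [sdiff_sdiff_right_self]
    exact (measureReal_mono inter_subset_right).trans hDδ
  · rw [measure_pos_iff_measureReal_pos]
    linarith
  · rw [expandsOn_iff (by norm_num)]
    intro A hA hAZ hApos hAhalf
    rcases lt_or_ge (ν.real A) δ with hsmall | hlarge
    · linarith [five_div_four_mul_lt_of_greedy (fun n => (hDs n).1) hD (fun n => (hR n).2.1)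
        hmax hA hAZ hApos hsmall]
    · linarith [hTM A _ hA (hYm.diff hDm) hlarge]

theorem exhaustionBy_expDomain (h : AsymExpDomain Γ ν univ) {Y : Set X} (hYm : MeasurableSet Y)
    (hYpos : 0 < ν Y) : ExhaustionBy ν Y fun Z => 0 < ν Z ∧ ν Z < ⊤ ∧ ExpDomain Γ ν Z := by
  rw [measure_pos_iff_measureReal_pos] at hYpos
  refine exhaustionBy_of_forall_exists ?_ fun ε hε => ?_
  · rintro Z₁ Z₂ h₁m h₂m ⟨h₁p, -, h₁⟩ ⟨h₂p, -, h₂⟩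
    exact ⟨h₁p.trans_le (measure_mono subset_union_left), measure_lt_top _ _,
      h₁.union h h₁m h₂m h₁p h₂p h₂⟩
  · obtain ⟨Z, hZY, hZm, hZε, hZpos, hZ⟩ :=
      h.exists_expDomain_subset hYm (lt_min hε (by positivity)) (min_le_right ε _)
    exact ⟨Z, hZm, hZY, ⟨hZpos, measure_lt_top _ _, hZ⟩, hZε.trans (min_le_left _ _)⟩

theorem asymExpDomain_univ_of_exhaustionBy
    (h : ExhaustionBy ν univ fun Z => 0 < ν Z ∧ ν Z < ⊤ ∧ AsymExpDomain Γ ν Z) :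
    AsymExpDomain Γ ν univ := by
  obtain ⟨W, hWmono, hWm, -, hW, hnull⟩ := h
  intro α hα hα2
  have hunion : ν.real (⋃ n, W n) = 1 := by
    rw [← compl_compl (⋃ n, W n), probReal_compl_eq_one_sub (MeasurableSet.iUnion hWm).compl,
      compl_eq_univ_sdiff, measureReal_def, hnull]
    simp
  obtain ⟨n, hn⟩ : ∃ n, 1 - α / 2 < ν.real (W n) :=
    ((tendsto_measureReal_iUnion_atTop hWmono).eventually
      (lt_mem_nhds (by linarith : 1 - α / 2 < ν.real (⋃ n, W n)))).exists
  obtain ⟨T, hT, hM⟩ := (hW n).2.2.exists_symmFin_one_sub_lt (hWm n) (hW n).1 (half_pos hα)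
    (by norm_num : (0 : ℝ) < 1 / 4)
  refine ⟨1 / 8, by norm_num, T, hT, ?_⟩
  rw [asymExpandsOn_iff hα.le (by norm_num)]
  intro A hA _ hαA hAhalf
  simp only [probReal_univ, mul_one, inter_univ] at hαA hAhalf ⊢
  have hAW : α / 2 * ν.real (W n) ≤ ν.real (A ∩ W n) := by
    nlinarith [add_sub_one_le_measureReal_inter (ν := ν) A (hWm n),
      measureReal_le_one (μ := ν) (s := W n)]
  calc (1 + 1 / 8) * ν.real A < (1 - 1 / 4) * ν.real (W n) := by linarith
    _ < ν.real (finSMul T (A ∩ W n) ∩ W n) := hM _ (hA.inter (hWm n)) inter_subset_right hAW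
    _ ≤ ν.real (finSMul T A) :=
        measureReal_mono (inter_subset_left.trans (finSMul_mono subset_rfl inter_subset_left))

end Structure

theorem structure_theorem_probability_general
    {Γ X : Type*} [Group Γ] [MulAction Γ X] [MeasurableSpace X]
    (ν : Measure X) [IsProbabilityMeasure ν]
    (hmeas : ∀ γ : Γ, Measurable fun x : X => γ • x) :
    List.TFAE
      [ AsymExpDomain Γ ν Set.univ,
        ∀ Y : Set X, MeasurableSet Y → 0 < ν Y →
          ExhaustionBy ν Y fun Z => 0 < ν Z ∧ ν Z < ⊤ ∧ ExpDomain Γ ν Z,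
        ExhaustionBy ν Set.univ fun Z => 0 < ν Z ∧ ν Z < ⊤ ∧ ExpDomain Γ ν Z,
        ExhaustionBy ν Set.univ fun Z => 0 < ν Z ∧ ν Z < ⊤ ∧ AsymExpDomain Γ ν Z ] := by
  have : MeasurableConstSMul Γ X := ⟨hmeas⟩
  tfae_have 1 → 2 := fun h _ => exhaustionBy_expDomain h
  tfae_have 2 → 3 := fun h => h univ MeasurableSet.univ (by simp)
  tfae_have 3 → 4 :=
    ExhaustionBy.mono fun _ ⟨hpos, hfin, hZ⟩ => ⟨hpos, hfin, hZ.asymExpDomain hpos⟩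
  tfae_have 4 → 1 := asymExpDomain_univ_of_exhaustionBy
  tfae_finish

/-- Theorem 4.6: structure theorem for asymptotically expanding
actions on probability spaces. -/
theorem structure_theorem_probability
    {Γ X : Type*} [Group Γ] [Countable Γ] [MulAction Γ X] [MeasurableSpace X]
    (ν : Measure X) [IsProbabilityMeasure ν]
    (hmeas : ∀ γ : Γ, Measurable fun x : X => γ • x) :
    List.TFAE
      [ AsymExpDomain Γ ν Set.univ,
        ∀ Y : Set X, MeasurableSet Y → 0 < ν Y →
          ExhaustionBy ν Y fun Z => 0 < ν Z ∧ ν Z < ⊤ ∧ ExpDomain Γ ν Z,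
        ExhaustionBy ν Set.univ fun Z => 0 < ν Z ∧ ν Z < ⊤ ∧ ExpDomain Γ ν Z,
        ExhaustionBy ν Set.univ fun Z => 0 < ν Z ∧ ν Z < ⊤ ∧ AsymExpDomain Γ ν Z ] :=
  structure_theorem_probability_general ν hmeas
end

section
/- Let (T_n, d_n) be a sequence of finite metric spaces, each equipped with a probability measure ν_n, such that the sequence has uniformly bounded measure ratios (there exists Q ≥ 1 with (1/Q) ≤ ν_n({v})/ν_n({w}) ≤ Q for all points v, w ∈ T_n and all n) and |T_n| → ∞. Then the following are equivalent: (i) there exist functions c̄ : (0,1/2] → ℝ_{>0} and k̄ : (0,1/2] → ℕ such that for every n, every α ∈ (0,1/2] and every subset A ⊆ T_n with α ≤ ν_n(A) ≤ 1/2 one has ν_n(N_{k̄(α)}(A)) > (1+c̄(α))·ν_n(A) (the spaces are a sequence of measured asymptotic expanders); (ii) there exist functions c : (0,1/2] → ℝ_{>0} and k : (0,1/2] → ℕ such that for every n, every α ∈ (0,1/2] and every subset A ⊆ T_n with α·|T_n| ≤ |A| ≤ |T_n|/2 one has |N_{k(α)}(A)| > (1+c(α))·|A| (the underlying metric spaces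 are a sequence of asymptotic expanders). -/
/-! Both conditions say that a family of probability measures expands: `ν n` in the first case,
the uniform measure on `T n` in the second. Bounded measure ratios make each of these measures at
most `Q` times the other, so it suffices to show that expansion passes to any measure dominated
by `Q` times an expanding one.

Iterating expansion, a set of measure at least `α` grows beyond `1 / 2` within `J` steps once
`(1 + c α) ^ J * α > 1 / 2`. Applied to the complement of a neighbourhood, the same argument
pushes a set of measure above `1 / 2` beyond `1 - ε`. With `ε = 1 / (4 Q)`, the neighbourhood of
a set that is large for the dominated measure has co-measure below `1 / (4 Q)` for the expanding
one, hence below `1 / 4` for the dominated one, which gives expansion with constant `1 / 2`. -/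

open MeasureTheory Filter ProbabilityTheory Set

namespace AsymptoticExpander

section Neighbourhood

variable {X : Type*} [PseudoMetricSpace X] {r s : ℝ} {A B : Set X}

def closedNbd (r : ℝ) (A : Set X) : Set X := {x | ∃ a ∈ A, dist x a ≤ r}

lemma subset_closedNbd (hr : 0 ≤ r) (A : Set X) : A ⊆ closedNbd r A :=
  fun x hx => ⟨x, hx, by rwa [dist_self]⟩

lemma closedNbd_mono (hrs : r ≤ s) (hAB : A ⊆ B) : closedNbd r A ⊆ closedNbd s B :=
  fun _ ⟨a, ha, hxa⟩ => ⟨a, hAB ha, hxa.trans hrs⟩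

lemma closedNbd_closedNbd_subset : closedNbd r (closedNbd s A) ⊆ closedNbd (r + s) A :=
  fun x ⟨y, ⟨a, ha, hya⟩, hxy⟩ => ⟨a, ha, (dist_triangle x y a).trans (add_le_add hxy hya)⟩

lemma disjoint_closedNbd_compl_closedNbd (r : ℝ) (A : Set X) :
    Disjoint A (closedNbd r (closedNbd r A)ᶜ) := by
  refine Set.disjoint_left.2 fun a ha ⟨y, hy, hya⟩ => hy ⟨a, ha, ?_⟩
  rwa [dist_comm]

end Neighbourhood

section Expansion

variable {X : Type*} [PseudoMetricSpace X] [MeasurableSpace X] {μ : Measure X}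

def ExpandsAt (μ : Measure X) (α c r : ℝ) : Prop :=
  ∀ A : Set X, α ≤ μ.real A → μ.real A ≤ 1 / 2 → (1 + c) * μ.real A < μ.real (closedNbd r A)

variable {α c r : ℝ}

lemma ExpandsAt.half_lt_measureReal_closedNbd [IsFiniteMeasure μ] (h : ExpandsAt μ α c r)
    (hc : 0 ≤ c) (hr : 0 ≤ r) {J : ℕ} (hJ : 1 < 2 * α * (1 + c) ^ J) {A : Set X}
    (hA : α ≤ μ.real A) : 1 / 2 < μ.real (closedNbd (J * r) A) := by
  have grow : ∀ j : ℕ, μ.real (closedNbd (j * r) A) ≤ 1 / 2 →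
      α * (1 + c) ^ j ≤ μ.real (closedNbd (j * r) A) := by
    intro j
    induction j with
    | zero => simpa using fun _ => hA.trans (measureReal_mono (subset_closedNbd le_rfl A))
    | succ j ih =>
      intro hsmall
      have hstep : closedNbd r (closedNbd (j * r) A) ⊆ closedNbd ((j + 1 : ℕ) * r) A :=
        closedNbd_closedNbd_subset.trans (closedNbd_mono (by push_cast; linarith) subset_rfl)
      have hsub : closedNbd (j * r) A ⊆ closedNbd ((j + 1 : ℕ) * r) A :=
        (subset_closedNbd hr _).trans hstep
      have hle := measureReal_mono hsub (μ := μ)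
      have hlarge : α ≤ μ.real (closedNbd (j * r) A) :=
        hA.trans (measureReal_mono (subset_closedNbd (by positivity) A))
      have hexp := h _ hlarge (hle.trans hsmall)
      calc α * (1 + c) ^ (j + 1) = (1 + c) * (α * (1 + c) ^ j) := by ring
        _ ≤ (1 + c) * μ.real (closedNbd (j * r) A) := by gcongr; exact ih (hle.trans hsmall)
        _ ≤ μ.real (closedNbd ((j + 1 : ℕ) * r) A) := hexp.le.trans (measureReal_mono hstep)
  by_contra! hJA
  linarith [grow J hJA]

variable [DiscreteMeasurableSpace X] [IsProbabilityMeasure μ]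

lemma one_sub_lt_measureReal_closedNbd_of_half_lt {ε : ℝ}
    (h : ∀ C : Set X, ε ≤ μ.real C → 1 / 2 < μ.real (closedNbd r C)) {B : Set X}
    (hB : 1 / 2 < μ.real B) : 1 - ε < μ.real (closedNbd r B) := by
  by_contra! hB'
  -- `C` has measure at least `ε`, and its `r`-neighbourhood is disjoint from `B`.
  set C := (closedNbd r B)ᶜ
  have hC : ε ≤ μ.real C := by
    rw [measureReal_compl (.of_discrete), probReal_univ]; linarith
  have hunion := measureReal_union (μ := μ) (disjoint_closedNbd_compl_closedNbd r B) .of_discrete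
  linarith [h C hC, measureReal_le_one (μ := μ) (s := B ∪ closedNbd r C)]

lemma ExpandsAt.one_sub_lt_measureReal_closedNbd {c' r' ε : ℝ} (h : ExpandsAt μ α c r)
    (hc : 0 ≤ c) (hr : 0 ≤ r) {J : ℕ} (hJ : 1 < 2 * α * (1 + c) ^ J)
    (h' : ExpandsAt μ ε c' r') (hc' : 0 ≤ c') (hr' : 0 ≤ r') {J' : ℕ}
    (hJ' : 1 < 2 * ε * (1 + c') ^ J') {A : Set X} (hA : α ≤ μ.real A) :
    1 - ε < μ.real (closedNbd (J' * r' + J * r) A) :=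
  (one_sub_lt_measureReal_closedNbd_of_half_lt
    (fun _ hC => h'.half_lt_measureReal_closedNbd hc' hr' hJ' hC)
    (h.half_lt_measureReal_closedNbd hc hr hJ hA)).trans_le
    (measureReal_mono closedNbd_closedNbd_subset)

lemma expandsAt_one_half_of_measureReal_le_mul {μ' : Measure X} [IsProbabilityMeasure μ']
    {Q : ℝ} (hQ : 0 < Q) (hμ : ∀ A, μ.real A ≤ Q * μ'.real A)
    (h : ∀ A : Set X, α / Q ≤ μ'.real A → 1 - 1 / (4 * Q) < μ'.real (closedNbd r A)) :
    ExpandsAt μ α (1 / 2) r := by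
  intro A hA hA2
  set N := closedNbd r A
  have hA' : α / Q ≤ μ'.real A := by
    rw [div_le_iff₀ hQ]; linarith [hμ A]
  have hN' : μ'.real Nᶜ < 1 / (4 * Q) := by
    rw [measureReal_compl .of_discrete, probReal_univ]; linarith [h A hA']
  have hN : μ.real Nᶜ < 1 / 4 := calc
    μ.real Nᶜ ≤ Q * μ'.real Nᶜ := hμ _
    _ < Q * (1 / (4 * Q)) := by gcongr
    _ = 1 / 4 := by field_simp
  rw [measureReal_compl .of_discrete, probReal_univ] at hN
  linarith

end Expansion

section Comparison

variable {X : Type*} [MeasurableSpace X] [MeasurableSingletonClass X] {Q : ℝ}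

lemma measureReal_le_mul_of_forall_singleton [Finite X] {μ μ' : Measure X} [IsFiniteMeasure μ]
    [IsFiniteMeasure μ'] (h : ∀ x, μ.real {x} ≤ Q * μ'.real {x}) (A : Set X) :
    μ.real A ≤ Q * μ'.real A := by
  classical
  have := Fintype.ofFinite X
  rw [← A.coe_toFinset, ← sum_measureReal_singleton, ← sum_measureReal_singleton, Finset.mul_sum]
  exact Finset.sum_le_sum fun x _ => h x

variable [Fintype X]

lemma measureReal_uniformOn_univ (A : Set X) :
    (uniformOn univ : Measure X).real A = A.ncard / Fintype.card X := by
  rw [measureReal_def, uniformOn_univ, Measure.count_apply_finite A A.toFinite,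
    ← Set.ncard_eq_toFinset_card, ENNReal.toReal_div]
  simp

variable {μ : Measure X} [IsProbabilityMeasure μ]

lemma sum_measureReal_singleton_univ : ∑ x, μ.real {x} = 1 := by
  rw [sum_measureReal_singleton, Finset.coe_univ, probReal_univ]

lemma measureReal_le_mul_uniformOn (hratio : ∀ v w : X, μ.real {v} ≤ Q * μ.real {w})
    (A : Set X) : μ.real A ≤ Q * (uniformOn univ : Measure X).real A := by
  have : Nonempty X := nonempty_of_isProbabilityMeasure μ
  refine measureReal_le_mul_of_forall_singleton (fun v => ?_) A
  have hm : (0 : ℝ) < Fintype.card X := by exact_mod_cast Fintype.card_pos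
  have hsum : ∑ _w : X, μ.real {v} ≤ ∑ w, Q * μ.real {w} := Finset.sum_le_sum fun w _ => hratio v w
  rw [← Finset.mul_sum, sum_measureReal_singleton_univ, Finset.sum_const, Finset.card_univ,
    nsmul_eq_mul] at hsum
  rw [measureReal_uniformOn_univ, Set.ncard_singleton, Nat.cast_one, mul_one_div,
    le_div_iff₀ hm]
  linarith

lemma uniformOn_measureReal_le_mul (hratio : ∀ v w : X, μ.real {v} ≤ Q * μ.real {w})
    (A : Set X) : (uniformOn univ : Measure X).real A ≤ Q * μ.real A := by
  have : Nonempty X := nonempty_of_isProbabilityMeasure μ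
  refine measureReal_le_mul_of_forall_singleton (fun v => ?_) A
  have hm : (0 : ℝ) < Fintype.card X := by exact_mod_cast Fintype.card_pos
  have hsum : ∑ w, μ.real {w} ≤ ∑ _w : X, Q * μ.real {v} := Finset.sum_le_sum fun w _ => hratio w v
  rw [sum_measureReal_singleton_univ, Finset.sum_const, Finset.card_univ, nsmul_eq_mul] at hsum
  rw [measureReal_uniformOn_univ, Set.ncard_singleton, Nat.cast_one, div_le_iff₀ hm]
  linarith

end Comparison

section Conversion

variable {X : Type*} [PseudoMetricSpace X] [MeasurableSpace X] {α c r : ℝ}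

lemma expandsAt_iff_ennreal {μ : Measure X} [IsFiniteMeasure μ] (hc : 0 ≤ c) :
    ExpandsAt μ α c r ↔ ∀ A : Set X, ENNReal.ofReal α ≤ μ A → μ A ≤ 1 / 2 →
      (1 + ENNReal.ofReal c) * μ A < μ (closedNbd r A) := by
  refine forall_congr' fun A => ?_
  have hhalf : μ A ≤ 1 / 2 ↔ μ.real A ≤ 1 / 2 := by
    rw [← ENNReal.toReal_le_toReal (measure_ne_top μ A) (by simp)]
    simp [measureReal_def]
  rw [ENNReal.ofReal_le_iff_le_toReal (measure_ne_top μ A), hhalf,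
    ← ENNReal.toReal_lt_toReal (by finiteness) (measure_ne_top μ _), ENNReal.toReal_mul,
    ENNReal.toReal_add ENNReal.one_ne_top ENNReal.ofReal_ne_top, ENNReal.toReal_one,
    ENNReal.toReal_ofReal hc]
  rfl

lemma expandsAt_uniformOn_univ_iff [Fintype X] [Nonempty X] [MeasurableSingletonClass X] :
    ExpandsAt (uniformOn univ : Measure X) α c r ↔ ∀ A : Set X,
      α * Fintype.card X ≤ A.ncard → (A.ncard : ℝ) ≤ Fintype.card X / 2 →
      (1 + c) * A.ncard < (closedNbd r A).ncard := by
  have hm : (0 : ℝ) < Fintype.card X := by exact_mod_cast Fintype.card_pos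
  simp only [ExpandsAt, measureReal_uniformOn_univ, le_div_iff₀ hm, div_le_iff₀ hm, ← mul_div_assoc,
    div_lt_div_iff_of_pos_right hm, one_div_mul_eq_div]

end Conversion

section Family

variable {ι : Type*} {X : ι → Type*} [∀ i, PseudoMetricSpace (X i)] [∀ i, MeasurableSpace (X i)]

def IsMeasuredAsymptoticExpander (μ : ∀ i, Measure (X i)) : Prop :=
  ∃ (c : ℝ → ℝ) (k : ℝ → ℕ), ∀ α : ℝ, 0 < α → α ≤ 1 / 2 →
    0 < c α ∧ ∀ i, ExpandsAt (μ i) α (c α) (k α)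

lemma exists_one_lt_two_mul_mul_pow {α c : ℝ} (hα : 0 < α) (hc : 0 < c) :
    ∃ J : ℕ, 1 < 2 * α * (1 + c) ^ J := by
  obtain ⟨J, hJ⟩ := pow_unbounded_of_one_lt (1 / (2 * α)) (by linarith : (1 : ℝ) < 1 + c)
  exact ⟨J, by rwa [div_lt_iff₀' (by positivity)] at hJ⟩

theorem IsMeasuredAsymptoticExpander.of_measureReal_le_mul [∀ i, DiscreteMeasurableSpace (X i)]
    {μ μ' : ∀ i, Measure (X i)} [∀ i, IsProbabilityMeasure (μ i)]
    [∀ i, IsProbabilityMeasure (μ' i)] (h : IsMeasuredAsymptoticExpander μ') {Q : ℝ}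
    (hQ : 1 ≤ Q) (hμ : ∀ i A, (μ i).real A ≤ Q * (μ' i).real A) :
    IsMeasuredAsymptoticExpander μ := by
  obtain ⟨c, k, hck⟩ := h
  suffices ∀ α : ℝ, 0 < α → α ≤ 1 / 2 → ∃ K : ℕ, ∀ i, ExpandsAt (μ i) α (1 / 2) K by
    choose! K hK using this
    exact ⟨fun _ => 1 / 2, K, fun α hα hα2 => ⟨by norm_num, hK α hα hα2⟩⟩
  intro α hα hα2
  have hQ0 : 0 < Q := by linarith
  set β := α / Q
  set ε := 1 / (4 * Q)
  have hβ : 0 < β := by positivity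
  have hε : 0 < ε := by positivity
  obtain ⟨hcβ, hkβ⟩ := hck β hβ ((div_le_self hα.le hQ).trans hα2)
  obtain ⟨hcε, hkε⟩ := hck ε hε (by rw [div_le_div_iff₀ (by positivity) (by norm_num)]; linarith)
  obtain ⟨J, hJ⟩ := exists_one_lt_two_mul_mul_pow hβ hcβ
  obtain ⟨J', hJ'⟩ := exists_one_lt_two_mul_mul_pow hε hcε
  refine ⟨J' * k ε + J * k β, fun i =>
    expandsAt_one_half_of_measureReal_le_mul hQ0 (hμ i) fun A hA => ?_⟩
  push_cast
  exact (hkβ i).one_sub_lt_measureReal_closedNbd hcβ.le (by positivity) hJ (hkε i) hcε.le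
    (by positivity) hJ' hA

lemma isMeasuredAsymptoticExpander_iff_ennreal {μ : ∀ i, Measure (X i)}
    [∀ i, IsFiniteMeasure (μ i)] :
    IsMeasuredAsymptoticExpander μ ↔ ∃ (c : ℝ → ℝ) (k : ℝ → ℕ), ∀ α : ℝ, 0 < α → α ≤ 1 / 2 →
      0 < c α ∧ ∀ i (A : Set (X i)), ENNReal.ofReal α ≤ μ i A → μ i A ≤ 1 / 2 →
        (1 + ENNReal.ofReal (c α)) * μ i A < μ i (closedNbd (k α) A) :=
  exists₂_congr fun _ _ => forall_congr' fun _ => imp_congr_right fun _ => imp_congr_right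
    fun _ => and_congr_right fun hc => forall_congr' fun _ => expandsAt_iff_ennreal hc.le

lemma isMeasuredAsymptoticExpander_uniformOn_univ_iff [∀ i, Fintype (X i)] [∀ i, Nonempty (X i)]
    [∀ i, MeasurableSingletonClass (X i)] :
    IsMeasuredAsymptoticExpander (fun i => (uniformOn univ : Measure (X i))) ↔
      ∃ (c : ℝ → ℝ) (k : ℝ → ℕ), ∀ α : ℝ, 0 < α → α ≤ 1 / 2 → 0 < c α ∧
        ∀ i (A : Set (X i)), α * Fintype.card (X i) ≤ A.ncard →
          (A.ncard : ℝ) ≤ Fintype.card (X i) / 2 →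
            (1 + c α) * A.ncard < (closedNbd (k α) A).ncard :=
  exists₂_congr fun _ _ => forall_congr' fun _ => imp_congr_right fun _ => imp_congr_right
    fun _ => and_congr_right fun _ => forall_congr' fun _ => expandsAt_uniformOn_univ_iff

end Family

end AsymptoticExpander

open AsymptoticExpander

theorem measured_asymptotic_expanders_iff_asymptotic_expanders_general
    (T : ℕ → Type*) [∀ n, MetricSpace (T n)] [∀ n, Fintype (T n)]
    [∀ n, MeasurableSpace (T n)] [∀ n, MeasurableSingletonClass (T n)]
    (ν : ∀ n, Measure (T n)) (hprob : ∀ n, IsProbabilityMeasure (ν n))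
    (Q : ℝ) (hQ : 1 ≤ Q)
    (hratio : ∀ (n : ℕ) (v w : T n), ν n {v} ≤ ENNReal.ofReal Q * ν n {w}) :
    (∃ (c : ℝ → ℝ) (k : ℝ → ℕ), ∀ α : ℝ, 0 < α → α ≤ 1 / 2 → 0 < c α ∧
        ∀ (n : ℕ) (A : Set (T n)), ENNReal.ofReal α ≤ ν n A → ν n A ≤ 1 / 2 →
          (1 + ENNReal.ofReal (c α)) * ν n A <
            ν n {x : T n | ∃ a ∈ A, dist x a ≤ (k α : ℝ)}) ↔
      (∃ (c : ℝ → ℝ) (k : ℝ → ℕ), ∀ α : ℝ, 0 < α → α ≤ 1 / 2 → 0 < c α ∧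
        ∀ (n : ℕ) (A : Set (T n)),
          α * (Fintype.card (T n) : ℝ) ≤ (A.ncard : ℝ) →
          (A.ncard : ℝ) ≤ (Fintype.card (T n) : ℝ) / 2 →
          (1 + c α) * (A.ncard : ℝ) <
            (({x : T n | ∃ a ∈ A, dist x a ≤ (k α : ℝ)} : Set (T n)).ncard : ℝ)) := by
  have hnonempty : ∀ n, Nonempty (T n) := fun n => nonempty_of_isProbabilityMeasure (ν n)
  have hratio_real : ∀ n (v w : T n), (ν n).real {v} ≤ Q * (ν n).real {w} := fun n v w => by
    simpa [measureReal_def, ENNReal.toReal_mul, ENNReal.toReal_ofReal (by linarith : 0 ≤ Q)]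
      using ENNReal.toReal_mono (by finiteness) (hratio n v w)
  refine isMeasuredAsymptoticExpander_iff_ennreal.symm.trans
    (Iff.trans ?_ isMeasuredAsymptoticExpander_uniformOn_univ_iff)
  exact ⟨fun h => h.of_measureReal_le_mul hQ fun n => uniformOn_measureReal_le_mul (hratio_real n),
    fun h => h.of_measureReal_le_mul hQ fun n => measureReal_le_mul_uniformOn (hratio_real n)⟩

/-- Lemma 7.5: a sequence of finite probability metric spaces with
uniformly bounded measure ratios and cardinalities tending to infinity is a sequence of
measured asymptotic expanders iff the underlying metric spaces are a sequence of
asymptotic expanders. -/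
theorem measured_asymptotic_expanders_iff_asymptotic_expanders
    (T : ℕ → Type*) [∀ n, MetricSpace (T n)] [∀ n, Fintype (T n)]
    [∀ n, MeasurableSpace (T n)] [∀ n, MeasurableSingletonClass (T n)]
    (ν : ∀ n, Measure (T n)) (hprob : ∀ n, IsProbabilityMeasure (ν n))
    (Q : ℝ) (hQ : 1 ≤ Q)
    (hratio : ∀ (n : ℕ) (v w : T n), ν n {v} ≤ ENNReal.ofReal Q * ν n {w})
    (hcard : Tendsto (fun n => Fintype.card (T n)) atTop atTop) :
    (∃ (c : ℝ → ℝ) (k : ℝ → ℕ), ∀ α : ℝ, 0 < α → α ≤ 1 / 2 → 0 < c α ∧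
        ∀ (n : ℕ) (A : Set (T n)), ENNReal.ofReal α ≤ ν n A → ν n A ≤ 1 / 2 →
          (1 + ENNReal.ofReal (c α)) * ν n A <
            ν n {x : T n | ∃ a ∈ A, dist x a ≤ (k α : ℝ)}) ↔
      (∃ (c : ℝ → ℝ) (k : ℝ → ℕ), ∀ α : ℝ, 0 < α → α ≤ 1 / 2 → 0 < c α ∧
        ∀ (n : ℕ) (A : Set (T n)),
          α * (Fintype.card (T n) : ℝ) ≤ (A.ncard : ℝ) →
          (A.ncard : ℝ) ≤ (Fintype.card (T n) : ℝ) / 2 →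
          (1 + c α) * (A.ncard : ℝ) <
            (({x : T n | ∃ a ∈ A, dist x a ≤ (k α : ℝ)} : Set (T n)).ncard : ℝ)) :=
  measured_asymptotic_expanders_iff_asymptotic_expanders_general T ν hprob Q hQ hratio
end
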